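/- (Solvability of the special linear FBSΔE.) Consider the coupled system: ΔX_t = -Y_t + D_t + (-Z_t + D̄_t) M_{t+1}, ΔY_t = -X_{t+1} + D̂_{t+1} + Z_t M_{t+1}, X_0 = x_0, Y_T = X_T + g, on the finite-state filtered space. For any adapted processes D, D̄, D̂ and any F_T-measurable g, this FBSΔE has a unique adapted solution (X, Y, Z) (Z unique up to Z_t M_{t+1}-equivalence). -/
import Mathlib


open Finset Matrix

section Setup

variable {Ω : Type*} [Fintype Ω] [DecidableEq Ω] {N : ℕ}

/-- A probability on a finite sample space with everywhere-positive weights. -/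
structure FinProb (Ω : Type*) [Fintype Ω] where
  p : Ω → ℝ
  pos : ∀ ω, 0 < p ω
  sum_one : ∑ ω, p ω = 1

/-- `ω` and `ω'` share the same `W`-path up to time `t` (the atoms of `F_t`). -/
def samePath (W : ℕ → Ω → Fin N) (t : ℕ) (ω ω' : Ω) : Prop :=
  ∀ s ∈ Finset.range (t + 1), W s ω = W s ω'

instance (W : ℕ → Ω → Fin N) (t : ℕ) (ω ω' : Ω) : Decidable (samePath W t ω ω') := by
  unfold samePath; infer_instance

/-- `F_t`-measurability: `f` is constant on the atoms of `F_t`. -/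
def measF (W : ℕ → Ω → Fin N) (t : ℕ) {α : Type*} (f : Ω → α) : Prop :=
  ∀ ω ω', samePath W t ω ω' → f ω = f ω'

/-- Conditional expectation given `F_t`. -/
noncomputable def cexp (P : FinProb Ω) (W : ℕ → Ω → Fin N) (t : ℕ)
    {E : Type*} [AddCommGroup E] [Module ℝ E] (Y : Ω → E) (ω : Ω) : E :=
  (∑ ω' ∈ univ.filter (fun ω' => samePath W t ω ω'), P.p ω')⁻¹ •
    ∑ ω' ∈ univ.filter (fun ω' => samePath W t ω ω'), P.p ω' • Y ω'

/-- The basis-vector valued process `W_t ∈ {e_1,…,e_N} ⊆ ℝ^N`. -/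
def wvec (W : ℕ → Ω → Fin N) (t : ℕ) (ω : Ω) : Fin N → ℝ :=
  fun j => if W t ω = j then 1 else 0

/-- `M_{t+1} = W_{t+1} - E[W_{t+1} | F_t]` (indexed so that `Mdiff P W t` is `M_{t+1}`). -/
noncomputable def Mdiff (P : FinProb Ω) (W : ℕ → Ω → Fin N) (t : ℕ) (ω : Ω) : Fin N → ℝ :=
  wvec W (t + 1) ω - cexp P W t (wvec W (t + 1)) ω

/-- One-step conditional transition probability `P_t^k = e_k^* E[W_{t+1}|F_t]`. -/
noncomputable def Pt (P : FinProb Ω) (W : ℕ → Ω → Fin N) (t : ℕ) (k : Fin N) (ω : Ω) : ℝ :=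
  cexp P W t (fun ω' => wvec W (t + 1) ω' k) ω

/-- The `N × (N-1)` matrix `Ĩ` whose top block is the identity and last row is all `-1`. -/
def Itil (n : ℕ) : Matrix (Fin (n + 1)) (Fin n) ℝ :=
  fun i j => if (i : ℕ) = (j : ℕ) then 1 else if (i : ℕ) = n then -1 else 0

end Setup

set_option linter.unusedSectionVars false

section Aux

variable {Ω : Type*} [Fintype Ω] [DecidableEq Ω] {N : ℕ}

lemma samePath_refl (W : ℕ → Ω → Fin N) (t : ℕ) (ω : Ω) : samePath W t ω ω :=
  fun _ _ => rfl

lemma samePath_symm {W : ℕ → Ω → Fin N} {t : ℕ} {ω ω' : Ω} (h : samePath W t ω ω') :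
    samePath W t ω' ω := fun s hs => (h s hs).symm

lemma samePath_trans {W : ℕ → Ω → Fin N} {t : ℕ} {ω₁ ω₂ ω₃ : Ω}
    (h : samePath W t ω₁ ω₂) (h' : samePath W t ω₂ ω₃) : samePath W t ω₁ ω₃ :=
  fun s hs => (h s hs).trans (h' s hs)

lemma samePath_mono {W : ℕ → Ω → Fin N} {s t : ℕ} (hst : s ≤ t) {ω ω' : Ω}
    (h : samePath W t ω ω') : samePath W s ω ω' := fun u hu =>
  h u (Finset.mem_range.2 (lt_of_lt_of_le (Finset.mem_range.1 hu) (by omega)))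

lemma measF_mono {W : ℕ → Ω → Fin N} {s t : ℕ} (hst : s ≤ t) {α : Type*} {f : Ω → α}
    (hf : measF W s f) : measF W t f := fun ω ω' h => hf ω ω' (samePath_mono hst h)

lemma samePath_succ {W : ℕ → Ω → Fin N} {t : ℕ} {ω ω' : Ω}
    (h : samePath W t ω ω') (hW : W (t + 1) ω = W (t + 1) ω') : samePath W (t + 1) ω ω' := by
  intro s hs
  rcases Finset.mem_range.1 hs with hs'
  rcases Nat.lt_succ_iff_lt_or_eq.1 hs' with h1 | h2
  · exact h s (Finset.mem_range.2 h1)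
  · subst h2; exact hW

lemma atom_eq {W : ℕ → Ω → Fin N} {t : ℕ} {ω ω₁ : Ω} (h : samePath W t ω ω₁) :
    (univ.filter (fun ω' => samePath W t ω ω') : Finset Ω)
      = univ.filter (fun ω' => samePath W t ω₁ ω') := by
  ext ω'
  simp only [mem_filter, mem_univ, true_and]
  exact ⟨fun h' => samePath_trans (samePath_symm h) h', fun h' => samePath_trans h h'⟩

lemma mem_atom_self (W : ℕ → Ω → Fin N) (t : ℕ) (ω : Ω) :
    ω ∈ (univ.filter (fun ω' => samePath W t ω ω') : Finset Ω) := by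
  simp [samePath_refl]

lemma sumAtom_pos (P : FinProb Ω) (W : ℕ → Ω → Fin N) (t : ℕ) (ω : Ω) :
    0 < ∑ ω' ∈ univ.filter (fun ω' => samePath W t ω ω'), P.p ω' :=
  Finset.sum_pos (fun ω' _ => P.pos ω') ⟨ω, mem_atom_self W t ω⟩

variable (P : FinProb Ω) (W : ℕ → Ω → Fin N)

lemma measF_cexp (t : ℕ) {E : Type*} [AddCommGroup E] [Module ℝ E] (f : Ω → E) :
    measF W t (cexp P W t f) := by
  intro ω ω₁ h
  unfold cexp
  rw [atom_eq h]

lemma cexp_of_measF {t : ℕ} {E : Type*} [AddCommGroup E] [Module ℝ E] {f : Ω → E}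
    (hf : measF W t f) : cexp P W t f = f := by
  funext ω
  unfold cexp
  have : ∀ ω' ∈ (univ.filter (fun ω' => samePath W t ω ω') : Finset Ω),
      P.p ω' • f ω' = P.p ω' • f ω := by
    intro ω' hω'
    simp only [mem_filter, mem_univ, true_and] at hω'
    rw [hf ω ω' hω']
  rw [Finset.sum_congr rfl this, ← Finset.sum_smul, smul_smul,
    inv_mul_cancel₀ (sumAtom_pos P W t ω).ne', one_smul]

lemma cexp_add (t : ℕ) {E : Type*} [AddCommGroup E] [Module ℝ E] (f g : Ω → E) (ω : Ω) :
    cexp P W t (fun ω' => f ω' + g ω') ω = cexp P W t f ω + cexp P W t g ω := by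
  unfold cexp
  rw [← smul_add, ← Finset.sum_add_distrib]
  simp [smul_add]

lemma cexp_sub (t : ℕ) {E : Type*} [AddCommGroup E] [Module ℝ E] (f g : Ω → E) (ω : Ω) :
    cexp P W t (fun ω' => f ω' - g ω') ω = cexp P W t f ω - cexp P W t g ω := by
  unfold cexp
  rw [← smul_sub, ← Finset.sum_sub_distrib]
  simp [smul_sub]

lemma cexp_congr_atom {t : ℕ} {E : Type*} [AddCommGroup E] [Module ℝ E] {f g : Ω → E} {ω : Ω}
    (h : ∀ ω', samePath W t ω ω' → f ω' = g ω') : cexp P W t f ω = cexp P W t g ω := by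
  unfold cexp
  congr 1
  refine Finset.sum_congr rfl fun ω' hω' => ?_
  simp only [mem_filter, mem_univ, true_and] at hω'
  rw [h ω' hω']

lemma cexp_dot_const (t : ℕ) (u : Fin N → ℝ) (f : Ω → Fin N → ℝ) (ω : Ω) :
    cexp P W t (fun ω' => u ⬝ᵥ f ω') ω = u ⬝ᵥ cexp P W t f ω := by
  unfold cexp
  simp only [dotProduct, Finset.sum_apply, Pi.smul_apply, smul_eq_mul, Finset.mul_sum]
  rw [Finset.sum_comm]
  refine Finset.sum_congr rfl fun ω' _ => Finset.sum_congr rfl fun k _ => by ring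

lemma cexp_Mdiff (t : ℕ) (ω : Ω) : cexp P W t (Mdiff P W t) ω = 0 := by
  unfold Mdiff
  rw [cexp_sub, cexp_of_measF P W (measF_cexp P W t (wvec W (t+1))), sub_self]

lemma cexp_dot_Mdiff (t : ℕ) {ξ : Ω → Fin N → ℝ} (hξ : measF W t ξ) (ω : Ω) :
    cexp P W t (fun ω' => ξ ω' ⬝ᵥ Mdiff P W t ω') ω = 0 := by
  rw [cexp_congr_atom P W (g := fun ω' => ξ ω ⬝ᵥ Mdiff P W t ω')
    (fun ω' h => by rw [hξ ω ω' h]), cexp_dot_const, cexp_Mdiff, dotProduct_zero]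

end Aux

section Zeta

variable {Ω : Type*} [Fintype Ω] [DecidableEq Ω] {N : ℕ}
variable (P : FinProb Ω) (W : ℕ → Ω → Fin N)

/-- Martingale representation kernel. -/
noncomputable def zeta (t : ℕ) (V : Ω → ℝ) (ω : Ω) (k : Fin N) : ℝ :=
  (∑ ω' ∈ univ.filter (fun ω' => samePath W t ω ω' ∧ W (t+1) ω' = k), P.p ω')⁻¹ *
   ∑ ω' ∈ univ.filter (fun ω' => samePath W t ω ω' ∧ W (t+1) ω' = k), P.p ω' * V ω'

lemma measF_zeta (t : ℕ) (V : Ω → ℝ) : measF W t (zeta P W t V) := by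
  intro ω ω₁ h
  funext k
  unfold zeta
  have : (univ.filter (fun ω' => samePath W t ω ω' ∧ W (t+1) ω' = k) : Finset Ω)
      = univ.filter (fun ω' => samePath W t ω₁ ω' ∧ W (t+1) ω' = k) := by
    ext ω'
    simp only [mem_filter, mem_univ, true_and]
    exact ⟨fun ⟨h1, h2⟩ => ⟨samePath_trans (samePath_symm h) h1, h2⟩,
           fun ⟨h1, h2⟩ => ⟨samePath_trans h h1, h2⟩⟩
  rw [this]

lemma zeta_dot_wvec {t : ℕ} {V : Ω → ℝ} (hV : measF W (t+1) V) (ω : Ω) :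
    zeta P W t V ω ⬝ᵥ wvec W (t+1) ω = V ω := by
  have hdot : zeta P W t V ω ⬝ᵥ wvec W (t+1) ω = zeta P W t V ω (W (t+1) ω) := by
    simp only [dotProduct, wvec, mul_ite, mul_one, mul_zero]
    simp
  rw [hdot]
  unfold zeta
  set A : Finset Ω := univ.filter (fun ω' => samePath W t ω ω' ∧ W (t+1) ω' = W (t+1) ω) with hA
  have hmem : ω ∈ A := by simp [hA, samePath_refl]
  have hconst : ∀ ω' ∈ A, P.p ω' * V ω' = P.p ω' * V ω := by
    intro ω' hω'
    simp only [hA, mem_filter, mem_univ, true_and] at hω'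
    rw [hV ω ω' (samePath_succ hω'.1 hω'.2.symm)]
  rw [Finset.sum_congr rfl hconst, ← Finset.sum_mul]
  have hpos : 0 < ∑ ω' ∈ A, P.p ω' := Finset.sum_pos (fun ω' _ => P.pos ω') ⟨ω, hmem⟩
  field_simp

lemma zeta_dot_cexp_wvec {t : ℕ} {V : Ω → ℝ} (hV : measF W (t+1) V) (ω : Ω) :
    zeta P W t V ω ⬝ᵥ cexp P W t (wvec W (t+1)) ω = cexp P W t V ω := by
  set S : ℝ := ∑ ω' ∈ univ.filter (fun ω' => samePath W t ω ω'), P.p ω' with hS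
  have hfilter : ∀ k : Fin N,
      (univ.filter (fun ω' => samePath W t ω ω' ∧ W (t+1) ω' = k) : Finset Ω)
        = (univ.filter (fun ω' => samePath W t ω ω')).filter (fun ω' => W (t+1) ω' = k) := by
    intro k; rw [Finset.filter_filter]
  have hcw : ∀ k, cexp P W t (wvec W (t+1)) ω k
      = S⁻¹ * ∑ ω' ∈ (univ.filter (fun ω' => samePath W t ω ω')).filter
          (fun ω' => W (t+1) ω' = k), P.p ω' := by
    intro k
    rw [Finset.sum_filter]
    unfold cexp
    rw [Pi.smul_apply, Finset.sum_apply, smul_eq_mul, ← hS]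
    congr 1
    refine Finset.sum_congr rfl fun ω' _ => ?_
    rw [Pi.smul_apply, smul_eq_mul]
    simp [wvec, mul_ite]
  have hkey : ∀ k, zeta P W t V ω k * ∑ ω' ∈ (univ.filter
        (fun ω' => samePath W t ω ω')).filter (fun ω' => W (t+1) ω' = k), P.p ω'
      = ∑ ω' ∈ (univ.filter (fun ω' => samePath W t ω ω')).filter
          (fun ω' => W (t+1) ω' = k), P.p ω' * V ω' := by
    intro k
    unfold zeta
    rw [hfilter k]
    set A : Finset Ω := (univ.filter (fun ω' => samePath W t ω ω')).filter
      (fun ω' => W (t+1) ω' = k) with hA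
    by_cases hAe : A.Nonempty
    · have hpos : 0 < ∑ ω' ∈ A, P.p ω' := Finset.sum_pos (fun ω' _ => P.pos ω') hAe
      field_simp
    · rw [Finset.not_nonempty_iff_eq_empty] at hAe
      simp [hAe]
  have hdot : zeta P W t V ω ⬝ᵥ cexp P W t (wvec W (t+1)) ω
      = ∑ k, zeta P W t V ω k * cexp P W t (wvec W (t+1)) ω k := rfl
  rw [hdot]
  have : ∀ k, zeta P W t V ω k * cexp P W t (wvec W (t+1)) ω k
      = S⁻¹ * ∑ ω' ∈ (univ.filter (fun ω' => samePath W t ω ω')).filter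
          (fun ω' => W (t+1) ω' = k), P.p ω' * V ω' := by
    intro k
    rw [hcw k, ← hkey k]; ring
  rw [Finset.sum_congr rfl (fun k _ => this k), ← Finset.mul_sum,
    Finset.sum_fiberwise _ (fun ω' => W (t+1) ω') (fun ω' => P.p ω' * V ω')]
  unfold cexp
  simp [smul_eq_mul, ← hS]

lemma zeta_dot_Mdiff {t : ℕ} {V : Ω → ℝ} (hV : measF W (t+1) V)
    (hV0 : ∀ ω, cexp P W t V ω = 0) (ω : Ω) :
    zeta P W t V ω ⬝ᵥ Mdiff P W t ω = V ω := by
  unfold Mdiff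
  rw [dotProduct_sub, zeta_dot_wvec P W hV, zeta_dot_cexp_wvec P W hV, hV0, sub_zero]

end Zeta

section Riccati

/-- The (deterministic) Riccati sequence, indexed by time-to-go. -/
noncomputable def ric : ℕ → ℝ
  | 0 => 1
  | (m+1) => (1 + ric m) / (2 + ric m)

lemma ric_bounds (m : ℕ) : 0 < ric m ∧ ric m ≤ 1 := by
  induction m with
  | zero => norm_num [ric]
  | succ m ih =>
    obtain ⟨h1, h2⟩ := ih
    constructor
    · show 0 < (1 + ric m) / (2 + ric m)
      exact div_pos (by linarith) (by linarith)
    · show (1 + ric m) / (2 + ric m) ≤ 1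
      rw [div_le_one (by linarith)]; linarith

lemma ric_pos (m : ℕ) : 0 < ric m := (ric_bounds m).1

lemma two_add_ric_pos (m : ℕ) : 0 < 2 + ric m := by have := ric_pos m; linarith

/-- `pcoef T t` is the decoupling coefficient `P_t`. -/
noncomputable def pcoef (T t : ℕ) : ℝ := ric (T - t)

lemma pcoef_pos (T t : ℕ) : 0 < pcoef T t := ric_pos _

lemma two_add_pcoef_pos (T t : ℕ) : 0 < 2 + pcoef T t := two_add_ric_pos _

lemma pcoef_T (T : ℕ) : pcoef T T = 1 := by simp [pcoef, Nat.sub_self, ric]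

lemma pcoef_rec {T t : ℕ} (ht : t < T) :
    pcoef T t = (1 + pcoef T (t+1)) / (2 + pcoef T (t+1)) := by
  have e1 : T - t = (T - (t+1)) + 1 := by omega
  rw [pcoef, e1]
  rfl

end Riccati

section Constr

variable {Ω : Type*} [Fintype Ω] [DecidableEq Ω] {N : ℕ}

/-- The decoupling field intercept `h_t`, indexed by time-to-go `m = T - t`. -/
noncomputable def hseq (P : FinProb Ω) (W : ℕ → Ω → Fin N) (T : ℕ)
    (D Dhat : ℕ → Ω → ℝ) (g : Ω → ℝ) : ℕ → Ω → ℝ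
  | 0 => g
  | (m+1) => fun ω =>
      ((1 + ric m) * D (T - (m+1)) ω +
        cexp P W (T - (m+1))
          (fun ω' => hseq P W T D Dhat g m ω' - Dhat (T - m) ω') ω) / (2 + ric m)

/-- `h_t` itself. -/
noncomputable def hfun (P : FinProb Ω) (W : ℕ → Ω → Fin N) (T : ℕ)
    (D Dhat : ℕ → Ω → ℝ) (g : Ω → ℝ) (t : ℕ) : Ω → ℝ :=
  hseq P W T D Dhat g (T - t)

lemma hfun_T (P : FinProb Ω) (W : ℕ → Ω → Fin N) (T : ℕ)
    (D Dhat : ℕ → Ω → ℝ) (g : Ω → ℝ) : hfun P W T D Dhat g T = g := by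
  simp [hfun, Nat.sub_self, hseq]

lemma hfun_rec (P : FinProb Ω) (W : ℕ → Ω → Fin N) {T t : ℕ}
    (D Dhat : ℕ → Ω → ℝ) (g : Ω → ℝ) (ht : t < T) (ω : Ω) :
    hfun P W T D Dhat g t ω =
      ((1 + pcoef T (t+1)) * D t ω +
        cexp P W t (fun ω' => hfun P W T D Dhat g (t+1) ω' - Dhat (t+1) ω') ω) /
        (2 + pcoef T (t+1)) := by
  have e1 : T - t = (T - (t+1)) + 1 := by omega
  have e2 : T - ((T - (t+1)) + 1) = t := by omega
  have e3 : T - (T - (t+1)) = t + 1 := by omega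
  rw [hfun, e1]
  show ((1 + ric (T - (t+1))) * D (T - ((T - (t+1))+1)) ω + _) / _ = _
  rw [e2, e3]
  rfl

/-- The martingale-difference part to be represented at time `t`. -/
noncomputable def Vt (P : FinProb Ω) (W : ℕ → Ω → Fin N) (T : ℕ)
    (D Dhat : ℕ → Ω → ℝ) (g : Ω → ℝ) (t : ℕ) (ω : Ω) : ℝ :=
  (Dhat (t+1) ω - hfun P W T D Dhat g (t+1) ω) +
    cexp P W t (fun ω' => hfun P W T D Dhat g (t+1) ω' - Dhat (t+1) ω') ω

/-- The constructed `Z`. -/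
noncomputable def Zfun (P : FinProb Ω) (W : ℕ → Ω → Fin N) (T : ℕ)
    (D Dhat : ℕ → Ω → ℝ) (Dbar : ℕ → Ω → Fin N → ℝ) (g : Ω → ℝ)
    (t : ℕ) (ω : Ω) : Fin N → ℝ := fun k =>
  ((1 + pcoef T (t+1)) * Dbar t ω k - zeta P W t (Vt P W T D Dhat g t) ω k) /
    (2 + pcoef T (t+1))

/-- The constructed forward component `X`. -/
noncomputable def Xfun (P : FinProb Ω) (W : ℕ → Ω → Fin N) (T : ℕ)
    (D Dhat : ℕ → Ω → ℝ) (Dbar : ℕ → Ω → Fin N → ℝ) (g : Ω → ℝ) (x0 : ℝ) :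
    ℕ → Ω → ℝ
  | 0 => fun _ => x0
  | (t+1) => fun ω =>
      Xfun P W T D Dhat Dbar g x0 t ω
        - (pcoef T t * Xfun P W T D Dhat Dbar g x0 t ω + hfun P W T D Dhat g t ω)
        + D t ω
        + ((Dbar t ω - Zfun P W T D Dhat Dbar g t ω) ⬝ᵥ Mdiff P W t ω)

/-- The constructed backward component `Y`. -/
noncomputable def Yfun (P : FinProb Ω) (W : ℕ → Ω → Fin N) (T : ℕ)
    (D Dhat : ℕ → Ω → ℝ) (Dbar : ℕ → Ω → Fin N → ℝ) (g : Ω → ℝ) (x0 : ℝ)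
    (t : ℕ) (ω : Ω) : ℝ :=
  pcoef T t * Xfun P W T D Dhat Dbar g x0 t ω + hfun P W T D Dhat g t ω

end Constr

section Verif

variable {Ω : Type*} [Fintype Ω] [DecidableEq Ω] {N : ℕ}
variable (P : FinProb Ω) (W : ℕ → Ω → Fin N) (T : ℕ)
variable (D Dhat : ℕ → Ω → ℝ) (Dbar : ℕ → Ω → Fin N → ℝ) (g : Ω → ℝ) (x0 : ℝ)

lemma cexp_const_mul (t : ℕ) (c : ℝ) (f : Ω → ℝ) (ω : Ω) :
    cexp P W t (fun ω' => c * f ω') ω = c * cexp P W t f ω := by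
  unfold cexp
  simp only [smul_eq_mul, Finset.mul_sum]
  exact Finset.sum_congr rfl fun ω' _ => by ring

lemma cexp_neg (t : ℕ) (f : Ω → ℝ) (ω : Ω) :
    cexp P W t (fun ω' => -f ω') ω = -cexp P W t f ω := by
  rw [cexp_congr_atom P W (g := fun ω' => (-1 : ℝ) * f ω') (fun ω' _ => by ring),
    cexp_const_mul]
  ring

lemma measF_wvec (t : ℕ) : measF W t (wvec W t) := by
  intro ω ω' h
  unfold wvec
  rw [h t (Finset.mem_range.2 (Nat.lt_succ_self t))]

lemma measF_Mdiff (t : ℕ) : measF W (t+1) (Mdiff P W t) := by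
  intro ω ω' h
  unfold Mdiff
  rw [measF_wvec W (t+1) ω ω' h,
    measF_cexp P W t (wvec W (t+1)) ω ω' (samePath_mono (Nat.le_succ t) h)]

lemma measF_hfun (hg : measF W T g) (hD : ∀ t, measF W t (D t)) :
    ∀ t ≤ T, measF W t (hfun P W T D Dhat g t) := by
  have haux : ∀ m, m ≤ T → measF W (T - m) (hseq P W T D Dhat g m) := by
    intro m
    induction m with
    | zero => intro _; simpa [hseq] using hg
    | succ m ih =>
      intro hm ω ω' h
      show hseq P W T D Dhat g (m+1) ω = hseq P W T D Dhat g (m+1) ω'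
      simp only [hseq]
      rw [hD (T - (m+1)) ω ω' h,
        measF_cexp P W (T - (m+1)) (fun ω' => hseq P W T D Dhat g m ω' - Dhat (T - m) ω') ω ω' h]
  intro t ht
  have := haux (T - t) (by omega)
  rwa [show T - (T - t) = t by omega] at this

lemma measF_Vt (hg : measF W T g) (hD : ∀ t, measF W t (D t))
    (hDhat : ∀ t, measF W t (Dhat t)) {t : ℕ} (ht : t < T) :
    measF W (t+1) (Vt P W T D Dhat g t) := by
  intro ω ω' h
  unfold Vt
  rw [hDhat (t+1) ω ω' h, measF_hfun P W T D Dhat g hg hD (t+1) ht ω ω' h,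
    measF_cexp P W t _ ω ω' (samePath_mono (Nat.le_succ t) h)]

lemma measF_Zfun (hDbar : ∀ t, measF W t (Dbar t)) (t : ℕ) :
    measF W t (Zfun P W T D Dhat Dbar g t) := by
  intro ω ω' h
  funext k
  unfold Zfun
  rw [congrFun (hDbar t ω ω' h) k, congrFun (measF_zeta P W t (Vt P W T D Dhat g t) ω ω' h) k]

lemma measF_Xfun (hg : measF W T g) (hD : ∀ t, measF W t (D t))
    (hDbar : ∀ t, measF W t (Dbar t)) :
    ∀ t ≤ T, measF W t (Xfun P W T D Dhat Dbar g x0 t) := by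
  intro t
  induction t with
  | zero => intro _ ω ω' _; rfl
  | succ t ih =>
    intro ht ω ω' h
    have h' : samePath W t ω ω' := samePath_mono (Nat.le_succ t) h
    show Xfun P W T D Dhat Dbar g x0 (t+1) ω = Xfun P W T D Dhat Dbar g x0 (t+1) ω'
    simp only [Xfun]
    rw [ih (by omega) ω ω' h', measF_hfun P W T D Dhat g hg hD t (by omega) ω ω' h',
      hD t ω ω' h', hDbar t ω ω' h', measF_Zfun P W T D Dhat Dbar g hDbar t ω ω' h',
      measF_Mdiff P W t ω ω' h]

lemma cexp_Vt_zero (t : ℕ) (ω : Ω) : cexp P W t (Vt P W T D Dhat g t) ω = 0 := by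
  unfold Vt
  rw [cexp_add, cexp_of_measF P W (measF_cexp P W t
      (fun ω' => hfun P W T D Dhat g (t+1) ω' - Dhat (t+1) ω')),
    cexp_congr_atom P W (g := fun ω' => -(hfun P W T D Dhat g (t+1) ω' - Dhat (t+1) ω'))
      (fun ω' _ => by ring), cexp_neg]
  ring

lemma Zfun_dot (hg : measF W T g) (hD : ∀ t, measF W t (D t))
    (hDhat : ∀ t, measF W t (Dhat t)) {t : ℕ} (ht : t < T) (ω : Ω) :
    (2 + pcoef T (t+1)) * (Zfun P W T D Dhat Dbar g t ω ⬝ᵥ Mdiff P W t ω)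
      = (1 + pcoef T (t+1)) * (Dbar t ω ⬝ᵥ Mdiff P W t ω) - Vt P W T D Dhat g t ω := by
  have ha : (2 + pcoef T (t+1)) ≠ 0 := (two_add_pcoef_pos T (t+1)).ne'
  have hζ := zeta_dot_Mdiff P W (measF_Vt P W T D Dhat g hg hD hDhat ht)
    (cexp_Vt_zero P W T D Dhat g t) ω
  have expand : Zfun P W T D Dhat Dbar g t ω ⬝ᵥ Mdiff P W t ω
      = ((1 + pcoef T (t+1)) * (Dbar t ω ⬝ᵥ Mdiff P W t ω)
          - zeta P W t (Vt P W T D Dhat g t) ω ⬝ᵥ Mdiff P W t ω) / (2 + pcoef T (t+1)) := by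
    simp only [Zfun, dotProduct, Finset.mul_sum]
    rw [← Finset.sum_sub_distrib, Finset.sum_div]
    exact Finset.sum_congr rfl fun k _ => by ring
  rw [expand, hζ]
  field_simp

end Verif

section Main

variable {Ω : Type*} [Fintype Ω] [DecidableEq Ω] {N : ℕ}
variable (P : FinProb Ω) (W : ℕ → Ω → Fin N) (T : ℕ)
variable (D Dhat : ℕ → Ω → ℝ) (Dbar : ℕ → Ω → Fin N → ℝ) (g : Ω → ℝ) (x0 : ℝ)

lemma bwd_eq (hg : measF W T g) (hD : ∀ t, measF W t (D t))
    (hDhat : ∀ t, measF W t (Dhat t)) {t : ℕ} (ht : t < T) (ω : Ω) :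
    Yfun P W T D Dhat Dbar g x0 (t+1) ω - Yfun P W T D Dhat Dbar g x0 t ω
      = -(Xfun P W T D Dhat Dbar g x0 (t+1) ω) + Dhat (t+1) ω
        + Zfun P W T D Dhat Dbar g t ω ⬝ᵥ Mdiff P W t ω := by
  have ha : (2 + pcoef T (t+1)) ≠ 0 := (two_add_pcoef_pos T (t+1)).ne'
  simp only [Yfun]
  set p1 := pcoef T (t+1) with hp1
  set xt := Xfun P W T D Dhat Dbar g x0 t ω with hxt
  set x1 := Xfun P W T D Dhat Dbar g x0 (t+1) ω with hx1d
  set h1 := hfun P W T D Dhat g (t+1) ω with hh1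
  set ht' := hfun P W T D Dhat g t ω with hht'
  set dh := Dhat (t+1) ω with hdh
  set z := Zfun P W T D Dhat Dbar g t ω ⬝ᵥ Mdiff P W t ω with hzd
  set mb := Dbar t ω ⬝ᵥ Mdiff P W t ω with hmb
  set c := cexp P W t (fun ω' => hfun P W T D Dhat g (t+1) ω' - Dhat (t+1) ω') ω with hc
  have hvt : Vt P W T D Dhat g t ω = dh - h1 + c := by
    simp only [Vt, ← hh1, ← hdh, ← hc]
  have e2 : (2 + p1) * z = (1 + p1) * mb - (dh - h1 + c) := by
    rw [hzd, hmb, ← hvt, hp1]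
    exact Zfun_dot P W T D Dhat Dbar g hg hD hDhat ht ω
  have e3 : ht' * (2 + p1) = (1 + p1) * D t ω + c := by
    have hrec := hfun_rec P W D Dhat g ht ω
    rw [← hht', ← hc, ← hp1] at hrec
    rw [hrec]
    field_simp
  have e4 : pcoef T t * (2 + p1) = 1 + p1 := by
    have hrec := pcoef_rec ht
    rw [← hp1] at hrec
    rw [hrec]
    field_simp
  have e1 : x1 = xt - (pcoef T t * xt + ht') + D t ω + (mb - z) := by
    rw [hx1d, hxt, hht', hzd, hmb, ← sub_dotProduct]
    simp only [Xfun]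
  linear_combination (1 + p1) * e1 - xt * e4 - e3 - e2

lemma uniq_step (hg : measF W T g) (hD : ∀ t, measF W t (D t))
    (hDhat : ∀ t, measF W t (Dhat t)) (hDbar : ∀ t, measF W t (Dbar t))
    (X' Y' : ℕ → Ω → ℝ) (Z' : ℕ → Ω → Fin N → ℝ) {t : ℕ} (ht : t < T)
    (hX' : measF W t (X' t)) (hY' : measF W t (Y' t)) (hZ' : measF W t (Z' t))
    (hfwd : ∀ ω, X' (t+1) ω - X' t ω
      = -(Y' t ω) + D t ω + (-(Z' t ω) + Dbar t ω) ⬝ᵥ Mdiff P W t ω)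
    (hbwd : ∀ ω, Y' (t+1) ω - Y' t ω
      = -(X' (t+1) ω) + Dhat (t+1) ω + Z' t ω ⬝ᵥ Mdiff P W t ω)
    (hrel : ∀ ω, Y' (t+1) ω = pcoef T (t+1) * X' (t+1) ω + hfun P W T D Dhat g (t+1) ω) :
    (∀ ω, Y' t ω = pcoef T t * X' t ω + hfun P W T D Dhat g t ω) ∧
    (∀ ω, (2 + pcoef T (t+1)) * (Z' t ω ⬝ᵥ Mdiff P W t ω)
      = (1 + pcoef T (t+1)) * (Dbar t ω ⬝ᵥ Mdiff P W t ω) - Vt P W T D Dhat g t ω) := by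
  have ha : (2 + pcoef T (t+1)) ≠ 0 := (two_add_pcoef_pos T (t+1)).ne'
  set p1 := pcoef T (t+1) with hp1
  have E : ∀ ω, (2 + p1) * Y' t ω - (1 + p1) * X' t ω - (1 + p1) * D t ω
      = ((1 + p1) * (Dbar t ω ⬝ᵥ Mdiff P W t ω) - (2 + p1) * (Z' t ω ⬝ᵥ Mdiff P W t ω))
        + (hfun P W T D Dhat g (t+1) ω - Dhat (t+1) ω) := by
    intro ω
    have h1 := hfwd ω
    have h2 := hbwd ω
    have h3 := hrel ω
    rw [add_dotProduct, neg_dotProduct] at h1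
    rw [h3] at h2
    linear_combination (1 + p1) * h1 - h2
  have EC : ∀ ω, (2 + p1) * Y' t ω - (1 + p1) * X' t ω - (1 + p1) * D t ω
      = cexp P W t (fun ω' => hfun P W T D Dhat g (t+1) ω' - Dhat (t+1) ω') ω := by
    intro ω
    have hFmeas : measF W t (fun ω' => (2 + p1) * Y' t ω' - (1 + p1) * X' t ω'
        - (1 + p1) * D t ω') := by
      intro ω₁ ω₂ h
      simp only [hY' ω₁ ω₂ h, hX' ω₁ ω₂ h, hD t ω₁ ω₂ h]
    have lhs := congrFun (cexp_of_measF P W hFmeas) ω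
    have hcongr : cexp P W t (fun ω' => (2 + p1) * Y' t ω' - (1 + p1) * X' t ω'
          - (1 + p1) * D t ω') ω
        = cexp P W t (fun ω' =>
            ((1 + p1) * (Dbar t ω' ⬝ᵥ Mdiff P W t ω')
              - (2 + p1) * (Z' t ω' ⬝ᵥ Mdiff P W t ω'))
              + (hfun P W T D Dhat g (t+1) ω' - Dhat (t+1) ω')) ω :=
      cexp_congr_atom P W (fun ω' _ => E ω')
    rw [← lhs, hcongr, cexp_add, cexp_sub P W t
        (fun ω' => (1 + p1) * (Dbar t ω' ⬝ᵥ Mdiff P W t ω'))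
        (fun ω' => (2 + p1) * (Z' t ω' ⬝ᵥ Mdiff P W t ω')),
      cexp_const_mul, cexp_const_mul,
      cexp_dot_Mdiff P W t (hDbar t) ω, cexp_dot_Mdiff P W t hZ' ω]
    ring
  constructor
  · intro ω
    have e3 : hfun P W T D Dhat g t ω * (2 + p1)
        = (1 + p1) * D t ω + cexp P W t
            (fun ω' => hfun P W T D Dhat g (t+1) ω' - Dhat (t+1) ω') ω := by
      have hrec := hfun_rec P W D Dhat g ht ω
      rw [← hp1] at hrec
      rw [hrec]
      field_simp
    have e4 : pcoef T t * (2 + p1) = 1 + p1 := by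
      have hrec := pcoef_rec ht
      rw [← hp1] at hrec
      rw [hrec]
      field_simp
    have hcomb : (2 + p1) * (Y' t ω - (pcoef T t * X' t ω + hfun P W T D Dhat g t ω)) = 0 := by
      linear_combination EC ω - e3 - X' t ω * e4
    rcases mul_eq_zero.1 hcomb with h | h
    · exact absurd h ha
    · linarith
  · intro ω
    have hE := E ω
    rw [EC ω] at hE
    have hvt : Vt P W T D Dhat g t ω
        = Dhat (t+1) ω - hfun P W T D Dhat g (t+1) ω
          + cexp P W t (fun ω' => hfun P W T D Dhat g (t+1) ω' - Dhat (t+1) ω') ω := rfl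
    linear_combination hE + hvt

end Main

/-- unique solvability of the special linear FBSΔE. -/
theorem stmt11 {Ω : Type*} [Fintype Ω] [DecidableEq Ω] {n : ℕ}
    (P : FinProb Ω) (W : ℕ → Ω → Fin (n + 1)) (T : ℕ) (hT : 1 ≤ T)
    (hpos : ∀ t < T, ∀ k ω, 0 < Pt P W t k ω)
    (D Dhat : ℕ → Ω → ℝ) (Dbar : ℕ → Ω → Fin (n + 1) → ℝ)
    (hDad : ∀ t, measF W t (D t)) (hDhatad : ∀ t, measF W t (Dhat t))
    (hDbarad : ∀ t, measF W t (Dbar t))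
    (g : Ω → ℝ) (hg : measF W T g) (x0 : ℝ) :
    ∃ (X Y : ℕ → Ω → ℝ) (Z : ℕ → Ω → Fin (n + 1) → ℝ),
      ((∀ t ≤ T, measF W t (X t)) ∧ (∀ t ≤ T, measF W t (Y t)) ∧ (∀ t < T, measF W t (Z t)) ∧
        (∀ t < T, ∀ ω, X (t + 1) ω - X t ω =
            -(Y t ω) + D t ω + dotProduct (-(Z t ω) + Dbar t ω) (Mdiff P W t ω)) ∧
        (∀ t < T, ∀ ω, Y (t + 1) ω - Y t ω =
            -(X (t + 1) ω) + Dhat (t + 1) ω + dotProduct (Z t ω) (Mdiff P W t ω)) ∧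
        (∀ ω, X 0 ω = x0) ∧ (∀ ω, Y T ω = X T ω + g ω)) ∧
      (∀ (X' Y' : ℕ → Ω → ℝ) (Z' : ℕ → Ω → Fin (n + 1) → ℝ),
        (∀ t ≤ T, measF W t (X' t)) → (∀ t ≤ T, measF W t (Y' t)) →
        (∀ t < T, measF W t (Z' t)) →
        (∀ t < T, ∀ ω, X' (t + 1) ω - X' t ω =
            -(Y' t ω) + D t ω + dotProduct (-(Z' t ω) + Dbar t ω) (Mdiff P W t ω)) →
        (∀ t < T, ∀ ω, Y' (t + 1) ω - Y' t ω =
            -(X' (t + 1) ω) + Dhat (t + 1) ω + dotProduct (Z' t ω) (Mdiff P W t ω)) →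
        (∀ ω, X' 0 ω = x0) → (∀ ω, Y' T ω = X' T ω + g ω) →
        (∀ t ≤ T, ∀ ω, X' t ω = X t ω ∧ Y' t ω = Y t ω) ∧
        (∀ t < T, ∀ ω, dotProduct (Z' t ω) (Mdiff P W t ω) =
            dotProduct (Z t ω) (Mdiff P W t ω))) := by
  classical
  refine ⟨Xfun P W T D Dhat Dbar g x0, Yfun P W T D Dhat Dbar g x0, Zfun P W T D Dhat Dbar g,
    ⟨measF_Xfun P W T D Dhat Dbar g x0 hg hDad hDbarad, ?_,
      fun t _ => measF_Zfun P W T D Dhat Dbar g hDbarad t, ?_,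
      fun t ht ω => bwd_eq P W T D Dhat Dbar g x0 hg hDad hDhatad ht ω,
      fun ω => rfl, ?_⟩, ?_⟩
  · -- measurability of Y
    intro t ht ω ω' h
    unfold Yfun
    rw [measF_Xfun P W T D Dhat Dbar g x0 hg hDad hDbarad t ht ω ω' h,
      measF_hfun P W T D Dhat g hg hDad t ht ω ω' h]
  · -- forward equation
    intro t ht ω
    simp only [Xfun, Yfun]
    rw [add_dotProduct, neg_dotProduct, sub_dotProduct]
    ring
  · -- terminal condition
    intro ω
    unfold Yfun
    rw [pcoef_T, congrFun (hfun_T P W T D Dhat g) ω]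
    ring
  · -- uniqueness
    intro X' Y' Z' hX' hY' hZ' hfwd' hbwd' hX0' hYT'
    have key : ∀ m t, t + m = T → ∀ ω,
        Y' t ω = pcoef T t * X' t ω + hfun P W T D Dhat g t ω := by
      intro m
      induction m with
      | zero =>
        intro t htm ω
        have htT : t = T := by omega
        rw [htT, hYT' ω, pcoef_T, congrFun (hfun_T P W T D Dhat g) ω]
        ring
      | succ m ih =>
        intro t htm ω
        have ht : t < T := by omega
        exact (uniq_step P W T D Dhat Dbar g hg hDad hDhatad hDbarad X' Y' Z' ht
          (hX' t ht.le) (hY' t ht.le) (hZ' t ht) (hfwd' t ht) (hbwd' t ht)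
          (ih (t+1) (by omega))).1 ω
    have key' : ∀ t ≤ T, ∀ ω, Y' t ω = pcoef T t * X' t ω + hfun P W T D Dhat g t ω :=
      fun t ht => key (T - t) t (by omega)
    have keyZ : ∀ t < T, ∀ ω, Z' t ω ⬝ᵥ Mdiff P W t ω
        = Zfun P W T D Dhat Dbar g t ω ⬝ᵥ Mdiff P W t ω := by
      intro t ht ω
      have h1 := (uniq_step P W T D Dhat Dbar g hg hDad hDhatad hDbarad X' Y' Z' ht
        (hX' t ht.le) (hY' t ht.le) (hZ' t ht) (hfwd' t ht) (hbwd' t ht)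
        (key' (t+1) ht)).2 ω
      have h2 := Zfun_dot P W T D Dhat Dbar g hg hDad hDhatad ht ω
      exact mul_left_cancel₀ (two_add_pcoef_pos T (t+1)).ne' (h1.trans h2.symm)
    have Xeq : ∀ t, t ≤ T → ∀ ω, X' t ω = Xfun P W T D Dhat Dbar g x0 t ω := by
      intro t
      induction t with
      | zero => intro _ ω; rw [hX0' ω]; rfl
      | succ t ih =>
        intro ht ω
        have ht' : t < T := by omega
        have hXt := ih ht'.le ω
        have e1 := hfwd' t ht' ω
        have e2 : Xfun P W T D Dhat Dbar g x0 (t+1) ω - Xfun P W T D Dhat Dbar g x0 t ω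
            = -(Yfun P W T D Dhat Dbar g x0 t ω) + D t ω
              + (-(Zfun P W T D Dhat Dbar g t ω) + Dbar t ω) ⬝ᵥ Mdiff P W t ω := by
          simp only [Xfun, Yfun]
          rw [add_dotProduct, neg_dotProduct, sub_dotProduct]
          ring
        rw [add_dotProduct, neg_dotProduct] at e1 e2
        have hYt : Y' t ω = Yfun P W T D Dhat Dbar g x0 t ω := by
          rw [key' t ht'.le ω, hXt]; rfl
        have hZt := keyZ t ht' ω
        linear_combination e1 - e2 + hXt - hYt - hZt
    refine ⟨fun t ht ω => ⟨Xeq t ht ω, ?_⟩, keyZ⟩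
    rw [key' t ht ω, Xeq t ht ω]
    rfl
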